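/- Under the symmetric MS-selection policy, for every q ∈ 𝒬 the number Q̃_q := |{j ∈ 𝒬 : M_{q,j} ≥ 1}| of MSs served by at least one S-RRH that serves MS-q satisfies Q̃_q = min(Q, 2Q − L − 2Q̄) = min(Q, (2 − 1/M)·Q − 2Q̄). -/

import Mathlib

open scoped Classical

/-- The unique representative in `{1, …, M}` of `j` modulo `M` (for `j ≥ 1`). -/
def sigmaRep (M j : ℕ) : ℕ := (j - 1) % M + 1

/-- The index `m ∈ {1, …, M}` of the block `𝒬_m = {(m−1)L+1, …, mL}` containing `q`. -/
def blk (L q : ℕ) : ℕ := (q - 1) / L + 1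

/-- `q ∈ S̄_m = ⋃_{i=1}^{K} 𝒬_{σ(i+m)}`: MS-`q` is discarded by S-RRH-`m`
under the symmetric MS-selection policy. -/
def discardedBy (M L K m q : ℕ) : Prop :=
  ∃ i ∈ Finset.Icc 1 K, blk L q = sigmaRep M (i + m)

/-- S-RRH-`m` serves MS-`q`. -/
def servesMS (M L K m q : ℕ) : Prop := ¬ discardedBy M L K m q

/-- `M_q`: the number of S-RRHs serving MS-`q`. -/
noncomputable def numServing (M L K q : ℕ) : ℕ :=
  ((Finset.Icc 1 M).filter fun m => servesMS M L K m q).card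

/-- `M_{q,j}`: the number of S-RRHs serving both MS-`q` and MS-`j`. -/
noncomputable def numServingBoth (M L K q j : ℕ) : ℕ :=
  ((Finset.Icc 1 M).filter fun m => servesMS M L K m q ∧ servesMS M L K m j).card

/-- `Q̃_q`: the number of MSs served by at least one S-RRH that serves MS-`q`. -/
noncomputable def numQtilde (M L K Q q : ℕ) : ℕ :=
  ((Finset.Icc 1 Q).filter fun j => 1 ≤ numServingBoth M L K q j).card

/-! Identify blocks with residues mod `M`. S-RRH-`m` serves block `b` iff the offset `b - m` avoids
the window `{1, …, K}`, so blocks at difference `d` share a serving S-RRH iff some residue `x` has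
both `x` and `x + d` outside the window, i.e. iff `d ∉ {M - K, …, K}`. Every block holds `L` MSs,
hence `Q̃_q = L · (M - #{M - K, …, K}) = L · min(M, 2M - 2K - 1)`, with `Q = ML` and `Q̄ = KL`. -/

open Finset

section Residues

variable {M : ℕ}

lemma sigmaRep_eq_val_add_one {n : ℕ} (hn : 1 ≤ n) :
    sigmaRep M n = ((n : ZMod M) - 1).val + 1 := by
  rw [sigmaRep, ← Nat.cast_pred hn, ZMod.val_natCast]

variable [NeZero M]

lemma val_sub_one_add_one_mem_Icc (x : ZMod M) : (x - 1).val + 1 ∈ Icc 1 M := by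
  have := (x - 1).val_lt
  rw [mem_Icc]
  omega

lemma eq_val_sub_one_add_one_iff {b : ℕ} (hb : b ∈ Icc 1 M) (x : ZMod M) :
    b = (x - 1).val + 1 ↔ (b : ZMod M) = x := by
  rw [mem_Icc] at hb
  constructor
  · rintro rfl
    push_cast [ZMod.natCast_zmod_val]
    ring
  · rintro rfl
    rw [← Nat.cast_pred hb.1, ZMod.val_natCast, Nat.mod_eq_of_lt (by omega)]
    omega

lemma natCast_val_sub_one_add_one (x : ZMod M) : (((x - 1).val + 1 : ℕ) : ZMod M) = x :=
  (eq_val_sub_one_add_one_iff (val_sub_one_add_one_mem_Icc x) x).mp rfl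

lemma exists_mem_Icc_natCast_iff (P : ZMod M → Prop) :
    (∃ m ∈ Icc 1 M, P ((m : ℕ) : ZMod M)) ↔ ∃ x, P x :=
  ⟨fun ⟨m, _, h⟩ => ⟨m, h⟩, fun ⟨x, h⟩ =>
    ⟨_, val_sub_one_add_one_mem_Icc x, by rwa [natCast_val_sub_one_add_one]⟩⟩

lemma card_filter_Icc_natCast (P : ZMod M → Prop) [DecidablePred P] :
    #{b ∈ Icc 1 M | P ((b : ℕ) : ZMod M)} = #{x : ZMod M | P x} := by
  refine card_nbij' Nat.cast (fun x => (x - 1).val + 1) ?_ ?_ ?_ ?_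
  · intro b hb
    simp_all
  · intro x hx
    simp only [coe_filter, mem_univ, true_and, Set.mem_ofPred_eq] at hx ⊢
    exact ⟨val_sub_one_add_one_mem_Icc x, by rwa [natCast_val_sub_one_add_one]⟩
  · intro b hb
    exact ((eq_val_sub_one_add_one_iff (mem_filter.mp hb).1 _).mpr rfl).symm
  · intro x _
    exact natCast_val_sub_one_add_one x

lemma card_filter_sub_right (P : ZMod M → Prop) [DecidablePred P] (c : ZMod M) :
    #{x : ZMod M | P (x - c)} = #{x : ZMod M | P x} :=
  card_equiv (Equiv.subRight c) (by simp)

lemma exists_mem_eq_natCast_iff_val_mem {S : Finset ℕ} (hS : S ⊆ range M) (x : ZMod M) :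
    (∃ i ∈ S, x = i) ↔ x.val ∈ S := by
  constructor
  · rintro ⟨i, hi, rfl⟩
    rwa [ZMod.val_natCast, Nat.mod_eq_of_lt (mem_range.mp (hS hi))]
  · exact fun h => ⟨x.val, h, (ZMod.natCast_zmod_val x).symm⟩

lemma card_filter_val_notMem {S : Finset ℕ} (hS : S ⊆ range M) :
    #{x : ZMod M | x.val ∉ S} = M - #S := by
  have hmem : #{x : ZMod M | x.val ∈ S} = #S := by
    refine card_nbij' ZMod.val Nat.cast (fun x hx => by simpa using hx) ?_ ?_ ?_
    · intro i hi
      simp only [coe_filter, mem_univ, true_and, Set.mem_ofPred_eq]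
      rwa [ZMod.val_natCast, Nat.mod_eq_of_lt (mem_range.mp (hS hi))]
    · intro x _
      exact ZMod.natCast_zmod_val x
    · intro i hi
      exact (ZMod.val_natCast M i).trans (Nat.mod_eq_of_lt (mem_range.mp (hS hi)))
  rw [filter_not, card_sdiff_of_subset (filter_subset _ _), hmem, card_univ, ZMod.card]

lemma exists_val_notMem_Icc_and_iff {K : ℕ} (hK : K < M) (d : ZMod M) :
    (∃ x : ZMod M, x.val ∉ Icc 1 K ∧ (x + d).val ∉ Icc 1 K) ↔ d.val ∉ Icc (M - K) K := by
  have hd := d.val_lt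
  constructor
  · rintro ⟨x, hx, hxd⟩
    have := x.val_lt
    rw [ZMod.val_add] at hxd
    simp only [mem_Icc, not_and_or, not_le] at hx hxd ⊢
    rcases lt_or_ge (x.val + d.val) M with h | h
    · rw [Nat.mod_eq_of_lt h] at hxd
      omega
    · rw [Nat.mod_eq_sub_mod h, Nat.mod_eq_of_lt (by omega)] at hxd
      omega
  · intro h
    by_cases hdK : d.val ≤ K
    · refine ⟨-d, ?_, by simp⟩
      rw [ZMod.neg_val]
      split_ifs <;> simp only [mem_Icc] at h ⊢ <;> omega
    · exact ⟨0, by simp, by simp only [zero_add, mem_Icc]; omega⟩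

end Residues

lemma blk_mem_Icc {M L q : ℕ} (hq : q ∈ Icc 1 (M * L)) : blk L q ∈ Icc 1 M := by
  rw [mem_Icc] at hq ⊢
  have hL : 0 < L := Nat.pos_of_ne_zero (by rintro rfl; omega)
  have : (q - 1) / L < M := (Nat.div_lt_iff_lt_mul hL).mpr (by omega)
  exact ⟨Nat.le_add_left 1 _, by rw [blk]; omega⟩

lemma one_le_and_blk_eq_iff {L b j : ℕ} (hL : 0 < L) (hb : 1 ≤ b) :
    1 ≤ j ∧ blk L j = b ↔ j ∈ Ioc ((b - 1) * L) ((b - 1) * L + L) := by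
  rw [blk, mem_Ioc]
  have : (j - 1) / L + 1 = b ↔ (j - 1) / L = b - 1 := by omega
  rw [this, Nat.div_eq_iff hL]
  omega

lemma card_filter_blk {M L : ℕ} (hL : 0 < L) (P : ℕ → Prop) [DecidablePred P] :
    #{j ∈ Icc 1 (M * L) | P (blk L j)} = L * #{b ∈ Icc 1 M | P b} := by
  rw [card_eq_sum_card_fiberwise (f := blk L) (t := {b ∈ Icc 1 M | P b}), sum_const_nat (m := L),
    mul_comm]
  · intro b hb
    simp only [mem_filter, mem_Icc] at hb
    have hbL : b * L = (b - 1) * L + L := by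
      rw [← Nat.succ_mul, Nat.succ_eq_add_one, Nat.sub_add_cancel hb.1.1]
    have hbM : b * L ≤ M * L := Nat.mul_le_mul_right L hb.1.2
    convert Nat.card_Ioc ((b - 1) * L) ((b - 1) * L + L) using 2
    · ext j
      rw [← one_le_and_blk_eq_iff hL hb.1.1]
      simp only [mem_filter, mem_Icc]
      constructor
      · rintro ⟨⟨⟨hj, -⟩, -⟩, hjb⟩
        exact ⟨hj, hjb⟩
      · rintro ⟨hj, hjb⟩
        have := mem_Ioc.mp ((one_le_and_blk_eq_iff hL hb.1.1).mp ⟨hj, hjb⟩)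
        exact ⟨⟨⟨hj, by omega⟩, hjb ▸ hb.2⟩, hjb⟩
    · omega
  · intro j hj
    simp only [coe_filter, mem_Icc, Set.mem_ofPred_eq] at hj ⊢
    exact ⟨mem_Icc.mp (blk_mem_Icc (mem_Icc.mpr hj.1)), hj.2⟩

section Policy

variable {M : ℕ} [NeZero M] {L K : ℕ}

lemma servesMS_iff (hK : K < M) (m : ℕ) {q : ℕ} (hq : blk L q ∈ Icc 1 M) :
    servesMS M L K m q ↔ ((blk L q : ZMod M) - m).val ∉ Icc 1 K := by
  have hS : Icc 1 K ⊆ range M := fun i hi => mem_range.mpr (by rw [mem_Icc] at hi; omega)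
  rw [servesMS, discardedBy, ← exists_mem_eq_natCast_iff_val_mem hS]
  refine not_congr (exists_congr fun i => and_congr_right fun hi => ?_)
  rw [sigmaRep_eq_val_add_one (by rw [mem_Icc] at hi; omega), eq_val_sub_one_add_one_iff hq,
    sub_eq_iff_eq_add]
  push_cast
  ring_nf

lemma one_le_numServingBoth_iff (hK : K < M) {q j : ℕ} (hq : blk L q ∈ Icc 1 M)
    (hj : blk L j ∈ Icc 1 M) :
    1 ≤ numServingBoth M L K q j ↔ ((blk L j : ZMod M) - blk L q).val ∉ Icc (M - K) K := by
  rw [numServingBoth, Nat.one_le_iff_ne_zero, Ne, card_eq_zero, ← Ne, ← nonempty_iff_ne_empty,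
    filter_nonempty_iff, ← exists_val_notMem_Icc_and_iff hK]
  simp_rw [servesMS_iff hK _ hq, servesMS_iff hK _ hj]
  refine (exists_mem_Icc_natCast_iff fun m : ZMod M =>
    ((blk L q : ZMod M) - m).val ∉ Icc 1 K ∧ ((blk L j : ZMod M) - m).val ∉ Icc 1 K).trans ⟨?_, ?_⟩
  · rintro ⟨m, hmq, hmj⟩
    exact ⟨_ - m, hmq, by rwa [sub_add_sub_cancel']⟩
  · rintro ⟨x, hx, hxj⟩
    exact ⟨_ - x, by rwa [sub_sub_cancel], by
      rwa [show (blk L j : ZMod M) - (blk L q - x) = x + (blk L j - blk L q) by ring]⟩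

lemma numQtilde_eq (hK : K < M) {q : ℕ} (hq : q ∈ Icc 1 (M * L)) :
    numQtilde M L K (M * L) q = L * (M - #(Icc (M - K) K)) := by
  have hL : 0 < L := Nat.pos_of_ne_zero (by rintro rfl; simp at hq)
  have hS : Icc (M - K) K ⊆ range M := fun i hi => mem_range.mpr (by rw [mem_Icc] at hi; omega)
  rw [numQtilde,
    filter_congr fun j hj => one_le_numServingBoth_iff hK (blk_mem_Icc hq) (blk_mem_Icc hj),
    card_filter_blk hL fun b : ℕ => ((b : ZMod M) - blk L q).val ∉ Icc (M - K) K,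
    card_filter_Icc_natCast fun x : ZMod M => (x - blk L q).val ∉ Icc (M - K) K,
    card_filter_sub_right (fun x : ZMod M => x.val ∉ Icc (M - K) K), card_filter_val_notMem hS]

end Policy

lemma natCast_sub_card_Icc_eq_min {M K : ℕ} (hK : K < M) :
    ((M - #(Icc (M - K) K) : ℕ) : ℚ) = min (M : ℚ) (2 * M - 1 - 2 * K) := by
  rw [Nat.card_Icc]
  rcases le_or_gt (2 * K + 1) M with h | h
  · have h' : ((2 * K + 1 : ℕ) : ℚ) ≤ M := by exact_mod_cast h
    push_cast at h'
    rw [show M - (K + 1 - (M - K)) = M by omega, min_eq_left (by linarith)]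
  · have h' : ((M + 1 : ℕ) : ℚ) ≤ 2 * K + 1 := by exact_mod_cast h
    push_cast at h'
    rw [min_eq_right (by linarith), Nat.cast_sub (by omega), Nat.cast_sub (by omega),
      Nat.cast_sub (by omega)]
    push_cast
    ring

theorem stmt_19_general (M Q Qbar L K : ℕ)
    (hlt : Qbar < Q) (hL : Q = M * L) (hK : K * Q = M * Qbar) :
    ∀ q ∈ Finset.Icc 1 Q,
      (numQtilde M L K Q q : ℚ) =
          min (Q : ℚ) (2 * (Q : ℚ) - (L : ℚ) - 2 * (Qbar : ℚ)) ∧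
        (numQtilde M L K Q q : ℚ) =
          min (Q : ℚ) ((2 - 1 / (M : ℚ)) * (Q : ℚ) - 2 * (Qbar : ℚ)) := by
  intro q hq
  subst hL
  have hM : 0 < M := Nat.pos_of_ne_zero (by rintro rfl; simp at hq)
  obtain rfl : Qbar = K * L := Nat.eq_of_mul_eq_mul_left hM (by rw [← hK]; ring)
  have hKM : K < M := Nat.lt_of_mul_lt_mul_right hlt
  have : NeZero M := ⟨hM.ne'⟩
  have hQtilde : (numQtilde M L K (M * L) q : ℚ) =
      min (M * L : ℚ) (2 * (M * L) - L - 2 * (K * L)) := by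
    rw [numQtilde_eq hKM hq, Nat.cast_mul, natCast_sub_card_Icc_eq_min hKM,
      mul_min_of_nonneg _ _ (Nat.cast_nonneg L)]
    ring_nf
  push_cast
  refine ⟨hQtilde, ?_⟩
  rwa [show (2 - 1 / (M : ℚ)) * (M * L) = 2 * (M * L) - L by field_simp]

/-- Under the symmetric MS-selection policy,
`Q̃_q = min(Q, 2Q − L − 2Q̄) = min(Q, (2 − 1/M)·Q − 2Q̄)`. -/
theorem stmt_19 (M Q Qbar L K : ℕ) (hM : 0 < M) (hQ : 0 < Q) (hQbar : 0 < Qbar)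
    (hlt : Qbar < Q) (hL : Q = M * L) (hK : K * Q = M * Qbar) :
    ∀ q ∈ Finset.Icc 1 Q,
      (numQtilde M L K Q q : ℚ) =
          min (Q : ℚ) (2 * (Q : ℚ) - (L : ℚ) - 2 * (Qbar : ℚ)) ∧
        (numQtilde M L K Q q : ℚ) =
          min (Q : ℚ) ((2 - 1 / (M : ℚ)) * (Q : ℚ) - 2 * (Qbar : ℚ)) :=
  stmt_19_general M Q Qbar L K hlt hL hK
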